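/- arXiv:1205.1270 — 5 statements merged into one kernel-verified Lean document; each statement's English description precedes it below -/
import Mathlib

section
/- Let Q ⊆ ℝ^n be a lattice polytope (vertices in ℤ^n) containing the origin in its interior, and let Q* = {x ∈ ℝ^n : ⟨v, x⟩ ≥ −1 for all vertices v of Q} be its dual polytope. Then the origin is the only lattice point in the interior of Q*. -/
/-- If `Q ⊆ ℝⁿ` is a full-dimensional lattice polytope with `0` in its interior and
`Q* = {x : ⟨v,x⟩ ≥ −1 for all generating lattice vertices v of Q}` is its dual polytope,
then the origin is the only lattice point in the interior of `Q*`. -/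
theorem dual_polytope_interior_lattice_point (n : ℕ) (hn : 1 ≤ n)
    (V : Set (Fin n → ℝ)) (hVfin : V.Finite) (hVlat : ∀ v ∈ V, ∀ i, ∃ m : ℤ, v i = (m : ℝ))
    (Q : Set (Fin n → ℝ)) (hQ : Q = convexHull ℝ V)
    (h0 : (0 : Fin n → ℝ) ∈ interior Q)
    (Qdual : Set (Fin n → ℝ)) (hQdual : Qdual = {x | ∀ v ∈ V, -1 ≤ ∑ i, v i * x i}) :
    ∀ x ∈ interior Qdual, (∀ i, ∃ m : ℤ, x i = (m : ℝ)) → x = 0 := by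
  intro x hx hxlat
  by_contra hx0
  -- get a ball around x inside Qdual
  rw [mem_interior_iff_mem_nhds, Metric.mem_nhds_iff] at hx
  obtain ⟨ε, hε, hball⟩ := hx
  have hxnorm : (0:ℝ) < ‖x‖ := norm_pos_iff.mpr hx0
  set c : ℝ := ε / (2 * ‖x‖) with hc
  have hcpos : 0 < c := div_pos hε (by positivity)
  have hy : (1 + c) • x ∈ Qdual := by
    apply hball
    rw [Metric.mem_ball]
    have : (1 + c) • x - x = c • x := by
      rw [add_smul, one_smul]; abel
    rw [dist_eq_norm, this, norm_smul, Real.norm_eq_abs, abs_of_pos hcpos, hc]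
    rw [div_mul_eq_mul_div, mul_comm (2:ℝ) ‖x‖, ← div_div,
      mul_div_assoc, div_self (ne_of_gt hxnorm), mul_one]
    linarith
  rw [hQdual] at hy
  -- each ⟨v,x⟩ is a nonneg integer
  have hvx : ∀ v ∈ V, (0:ℝ) ≤ ∑ i, v i * x i := by
    intro v hv
    obtain ⟨M, hM⟩ : ∃ M : ℤ, ∑ i, v i * x i = (M : ℝ) := by
      have : ∀ i, ∃ m : ℤ, v i * x i = (m : ℝ) := by
        intro i
        obtain ⟨a, ha⟩ := hVlat v hv i
        obtain ⟨b, hb⟩ := hxlat i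
        exact ⟨a * b, by push_cast [ha, hb]; ring⟩
      choose f hf using this
      exact ⟨∑ i, f i, by push_cast; exact Finset.sum_congr rfl fun i _ => hf i⟩
    have hy' := hy v hv
    have hs : ∑ i, v i * ((1 + c) • x) i = (1 + c) * ∑ i, v i * x i := by
      rw [Finset.mul_sum]
      apply Finset.sum_congr rfl
      intro i _
      simp [Pi.smul_apply, smul_eq_mul]; ring
    rw [hs, hM] at hy'
    rw [hM]
    by_contra hneg
    push_neg at hneg
    have hM1 : (M:ℝ) ≤ -1 := by
      have : M < 0 := by exact_mod_cast hneg
      have : M ≤ -1 := by omega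
      exact_mod_cast this
    nlinarith
  -- every point of Q pairs nonneg with x
  have hQsub : Q ⊆ {q | (0:ℝ) ≤ ∑ i, q i * x i} := by
    rw [hQ]
    apply convexHull_min hvx
    intro p hp q hq a b ha hb hab
    show (0:ℝ) ≤ ∑ i, (a • p + b • q) i * x i
    have : ∑ i, (a • p + b • q) i * x i
        = a * ∑ i, p i * x i + b * ∑ i, q i * x i := by
      rw [Finset.mul_sum, Finset.mul_sum, ← Finset.sum_add_distrib]
      apply Finset.sum_congr rfl
      intro i _
      simp [Pi.add_apply, Pi.smul_apply, smul_eq_mul]; ring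
    rw [this]
    exact add_nonneg (mul_nonneg ha hp) (mul_nonneg hb hq)
  -- use interior point 0 of Q: a small negative multiple of x is in Q
  rw [mem_interior_iff_mem_nhds, Metric.mem_nhds_iff] at h0
  obtain ⟨δ, hδ, hball0⟩ := h0
  set d : ℝ := δ / (2 * ‖x‖) with hd
  have hdpos : 0 < d := div_pos hδ (by positivity)
  have hq : (-d) • x ∈ Q := by
    apply hball0
    rw [Metric.mem_ball, dist_zero_right, norm_smul, Real.norm_eq_abs, abs_neg,
      abs_of_pos hdpos, hd]
    rw [div_mul_eq_mul_div, mul_comm (2:ℝ) ‖x‖, ← div_div,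
      mul_div_assoc, div_self (ne_of_gt hxnorm), mul_one]
    linarith
  have := hQsub hq
  simp only [Set.mem_setOf_eq, Pi.smul_apply, smul_eq_mul] at this
  have hsum : ∑ i, -d * x i * x i = -d * ∑ i, x i * x i := by
    rw [Finset.mul_sum]; apply Finset.sum_congr rfl; intro i _; ring
  rw [hsum] at this
  have hpos : 0 < ∑ i, x i * x i := by
    obtain ⟨i, hi⟩ : ∃ i, x i ≠ 0 := by
      by_contra h
      push_neg at h
      exact hx0 (funext h)
    apply Finset.sum_pos' (fun j _ => mul_self_nonneg _) ⟨i, Finset.mem_univ i, mul_self_pos.mpr hi⟩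
  nlinarith
end

section
/- Let R ⊆ ℝ^n be an n-dimensional polytope with n·Δ_n ⊆ R ⊆ ℝ^n_{≥0}, such that R − 𝟙 is a reflexive polytope (where 𝟙 = (1,…,1)), the barycenter of R is 𝟙, and vol(R) = (n+1)^n/n!. Then R = (n+1)Δ_n. -/
open MeasureTheory

/-- A set is a lattice polytope if it is the convex hull of finitely many integer points. -/
def IsLatticePolytope {n : ℕ} (P : Set (Fin n → ℝ)) : Prop :=
  ∃ V : Set (Fin n → ℝ), V.Finite ∧ (∀ v ∈ V, ∀ i, ∃ m : ℤ, v i = (m : ℝ)) ∧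
    P = convexHull ℝ V

/-- The dual polytope `P* = {x : ⟨y,x⟩ ≥ −1 for all y ∈ P}`. -/
def dualBody {n : ℕ} (P : Set (Fin n → ℝ)) : Set (Fin n → ℝ) :=
  {x | ∀ y ∈ P, -1 ≤ ∑ i, y i * x i}

/-- A reflexive polytope: a lattice polytope with `0` in its interior whose dual is
again a lattice polytope. -/
def IsReflexive {n : ℕ} (P : Set (Fin n → ℝ)) : Prop :=
  IsLatticePolytope P ∧ (0 : Fin n → ℝ) ∈ interior P ∧ IsLatticePolytope (dualBody P)

/-- The unimodular simplex `Δₙ = conv(0, e₁, …, eₙ)`. -/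
def unimodularSimplex (n : ℕ) : Set (Fin n → ℝ) :=
  convexHull ℝ (insert (0 : Fin n → ℝ) (Set.range fun i => Pi.single i (1 : ℝ)))

/-!
Let `P = (n+1)Δₙ = {x ≥ 0 | ∑ xᵢ ≤ n+1}` and `f x = n + 1 - ∑ xᵢ`. The barycenter condition gives
`∫_R f = vol R`, and slicing off one coordinate at a time gives `∫_P f = (n+1)ⁿ/n! = vol R`.
Since `R ⊆ ℝⁿ₊`, `f < 0` on `R \ P` while `f ≥ 0` on `P \ R`, so equality of the two integrals
forces `vol (R \ P) = 0`. A convex set with nonempty interior that lies in a closed set up to a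
null set lies in it entirely, so `R ⊆ P`; then `vol P = vol R` gives `P ⊆ R` in the same way.
-/

open Set
open scoped Nat Pointwise

theorem measure_sdiff_eq_zero_of_setIntegral_le {α : Type*} [MeasurableSpace α] {μ : Measure α}
    {f : α → ℝ} {s t : Set α} (hs : MeasurableSet s) (ht : MeasurableSet t)
    (hfs : IntegrableOn f s μ) (hft : IntegrableOn f t μ)
    (hneg : ∀ x ∈ s \ t, f x < 0) (hnonneg : ∀ x ∈ t \ s, 0 ≤ f x)
    (hle : ∫ x in t, f x ∂μ ≤ ∫ x in s, f x ∂μ) : μ (s \ t) = 0 := by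
  have hs_split := integral_inter_add_sdiff ht hfs
  have ht_split := integral_inter_add_sdiff hs hft
  rw [inter_comm] at ht_split
  have h_ts : 0 ≤ ∫ x in t \ s, f x ∂μ := setIntegral_nonneg (ht.diff hs) hnonneg
  have h_st : ∫ x in s \ t, -f x ∂μ ≤ 0 := by rw [integral_neg]; linarith
  have hf_pos : 0 ≤ᵐ[μ.restrict (s \ t)] fun x => -f x :=
    (ae_restrict_iff' (hs.diff ht)).mpr (.of_forall fun x hx => (neg_pos.mpr (hneg x hx)).le)
  have hsupp : (Function.support fun x => -f x) ∩ (s \ t) = s \ t :=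
    inter_eq_right.mpr fun x hx => neg_ne_zero.mpr (hneg x hx).ne
  by_contra hμ
  have := (setIntegral_pos_iff_support_of_nonneg_ae hf_pos (hfs.mono_set sdiff_subset).neg).mpr
    (by rw [hsupp]; exact pos_iff_ne_zero.mpr hμ)
  linarith

theorem Convex.subset_of_measure_sdiff_eq_zero {E : Type*} [AddCommGroup E] [Module ℝ E]
    [TopologicalSpace E] [IsTopologicalAddGroup E] [ContinuousSMul ℝ E] [MeasurableSpace E]
    {μ : Measure E} [μ.IsOpenPosMeasure] {s t : Set E} (hs : Convex ℝ s)
    (hs_int : (interior s).Nonempty) (ht : IsClosed t) (h : μ (s \ t) = 0) : s ⊆ t := by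
  have hint : interior s ⊆ t := sdiff_eq_empty.mp <|
    ((isOpen_interior.sdiff ht).measure_eq_zero_iff μ).mp
      (measure_mono_null (sdiff_subset_sdiff_left interior_subset) h)
  calc s ⊆ closure s := subset_closure
    _ = closure (interior s) := (hs.closure_interior_eq_closure_of_nonempty_interior hs_int).symm
    _ ⊆ t := closure_minimal hint ht

theorem setIntegral_sub_sum_of_barycenter {ι : Type*} [Fintype ι] {μ : Measure (ι → ℝ)}
    {s : Set (ι → ℝ)} (hint : IntegrableOn (fun x => x) s μ) (hfin : μ s ≠ ⊤)
    (hbary : ∫ x in s, x ∂μ = (μ s).toReal • fun _ => (1 : ℝ)) (c : ℝ) :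
    ∫ x in s, (c - ∑ i, x i) ∂μ = (c - Fintype.card ι) * (μ s).toReal := by
  have hcoord_int : ∀ i, IntegrableOn (fun x => x i) s μ := fun i =>
    (ContinuousLinearMap.proj i : (ι → ℝ) →L[ℝ] ℝ).integrable_comp hint
  have hcoord : ∀ i, ∫ x in s, x i ∂μ = (μ s).toReal := fun i => by
    simpa [hbary] using
      (ContinuousLinearMap.proj i : (ι → ℝ) →L[ℝ] ℝ).integral_comp_comm hint
  have hconst : IntegrableOn (fun _ => c) s μ := integrableOn_const hfin
  rw [integral_sub hconst (integrable_finsetSum _ fun i _ => hcoord_int i),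
    integral_finsetSum _ fun i _ => hcoord_int i, setIntegral_const]
  simp [hcoord, measureReal_def]
  ring

def cornerSimplex (n : ℕ) (c : ℝ) : Set (Fin n → ℝ) := {x | (∀ i, 0 ≤ x i) ∧ ∑ i, x i ≤ c}

section cornerSimplex

variable {n : ℕ} {c : ℝ}

theorem isClosed_cornerSimplex : IsClosed (cornerSimplex n c) := by
  simp only [cornerSimplex, ofPred_and, ofPred_forall]
  exact (isClosed_iInter fun i => isClosed_le continuous_const (continuous_apply i)).inter
    (isClosed_le (by fun_prop) continuous_const)

theorem measurableSet_cornerSimplex : MeasurableSet (cornerSimplex n c) :=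
  isClosed_cornerSimplex.measurableSet

theorem isCompact_cornerSimplex : IsCompact (cornerSimplex n c) :=
  (isCompact_univ_pi fun _ => isCompact_Icc (a := 0) (b := c)).of_isClosed_subset
    isClosed_cornerSimplex fun _ hx i _ =>
      ⟨hx.1 i, (Finset.single_le_sum (fun j _ => hx.1 j) (Finset.mem_univ i)).trans hx.2⟩

theorem convex_cornerSimplex : Convex ℝ (cornerSimplex n c) := by
  rintro x ⟨hx0, hxc⟩ y ⟨hy0, hyc⟩ a b ha hb hab
  refine ⟨fun i => add_nonneg (mul_nonneg ha (hx0 i)) (mul_nonneg hb (hy0 i)), ?_⟩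
  simp only [Pi.add_apply, Pi.smul_apply, smul_eq_mul, Finset.sum_add_distrib, ← Finset.mul_sum]
  calc a * ∑ i, x i + b * ∑ i, y i ≤ a * c + b * c := by gcongr
    _ = c := by rw [← add_mul, hab, one_mul]

theorem smul_cornerSimplex {a : ℝ} (ha : 0 < a) :
    a • cornerSimplex n c = cornerSimplex n (a * c) := by
  ext y
  rw [mem_smul_set_iff_inv_smul_mem₀ ha.ne']
  simp only [cornerSimplex, mem_ofPred_eq, Pi.smul_apply, smul_eq_mul, ← Finset.mul_sum,
    mul_nonneg_iff_of_pos_left (inv_pos.mpr ha), inv_mul_le_iff₀ ha]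

theorem cons_mem_cornerSimplex_iff {t : ℝ} {y : Fin n → ℝ} (ht : 0 ≤ t) :
    Fin.cons t y ∈ cornerSimplex (n + 1) c ↔ y ∈ cornerSimplex n (c - t) := by
  simp only [cornerSimplex, mem_ofPred_eq, Fin.forall_fin_succ, Fin.cons_zero, Fin.cons_succ,
    Fin.sum_cons, ht, true_and, le_sub_iff_add_le']

theorem indicator_cornerSimplex_cons (k : ℕ) (t : ℝ) (y : Fin n → ℝ) :
    (cornerSimplex (n + 1) c).indicator (fun x => (c - ∑ i, x i) ^ k) (Fin.cons t y) =
      (Icc 0 c).indicator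
        (fun t => (cornerSimplex n (c - t)).indicator (fun y => (c - t - ∑ i, y i) ^ k) y) t := by
  by_cases ht : 0 ≤ t
  · by_cases hy : y ∈ cornerSimplex n (c - t)
    · have htc : t ≤ c := by
        linarith [hy.2, Finset.sum_nonneg fun i (_ : i ∈ Finset.univ) => hy.1 i]
      rw [indicator_of_mem ((cons_mem_cornerSimplex_iff ht).mpr hy),
        indicator_of_mem (show t ∈ Icc 0 c from ⟨ht, htc⟩), indicator_of_mem hy, Fin.sum_cons,
        sub_sub]
    · rw [indicator_of_notMem (mt (cons_mem_cornerSimplex_iff ht).mp hy)]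
      simp [indicator_apply, hy]
  · have hc : Fin.cons t y ∉ cornerSimplex (n + 1) c := fun h => ht (by simpa using h.1 0)
    rw [indicator_of_notMem hc, indicator_of_notMem fun h => ht h.1]

theorem setIntegral_cornerSimplex_pow (k : ℕ) (hc : 0 ≤ c) :
    ∫ x in cornerSimplex n c, (c - ∑ i, x i) ^ k = c ^ (n + k) * k ! / (n + k)! := by
  induction n generalizing c with
  | zero =>
    have huniv : cornerSimplex 0 c = univ := eq_univ_of_forall fun x => ⟨finZeroElim, by simpa⟩
    simp [huniv, measureReal_def, volume_pi, Nat.factorial_ne_zero]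
  | succ n ih =>
    let e := MeasurableEquiv.piFinSuccAbove (fun _ : Fin (n + 1) => ℝ) 0
    have he : ∀ p, e.symm p = Fin.cons p.1 p.2 := fun p => by
      simp [e, MeasurableEquiv.piFinSuccAbove_symm_apply, Fin.insertNthEquiv, Fin.insertNth_zero']
    have hpres := (volume_preserving_piFinSuccAbove (fun _ : Fin (n + 1) => ℝ) 0).symm e
    let F := (cornerSimplex (n + 1) c).indicator fun x => (c - ∑ i, x i) ^ k
    have hF : Integrable F := ((Continuous.continuousOn (by fun_prop)).integrableOn_compact
      isCompact_cornerSimplex).integrable_indicator measurableSet_cornerSimplex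
    have hFe : Integrable fun p : ℝ × (Fin n → ℝ) => F (Fin.cons p.1 p.2) := by
      simpa [Function.comp_def, he] using
        (hpres.integrable_comp_emb e.symm.measurableEmbedding).mpr hF
    have hslice : ∀ t, ∫ y, F (Fin.cons t y) =
        (Icc 0 c).indicator (fun t => (c - t) ^ (n + k) * k ! / (n + k)!) t := fun t => by
      simp only [F, indicator_cornerSimplex_cons]
      by_cases ht : t ∈ Icc 0 c
      · simp only [indicator_of_mem ht, integral_indicator measurableSet_cornerSimplex,
          ih (sub_nonneg.mpr ht.2)]
      · simp only [indicator_of_notMem ht, integral_zero]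
    have hline : ∫ t in Icc 0 c, (c - t) ^ (n + k) = c ^ (n + k + 1) / (n + k + 1) := by
      rw [integral_Icc_eq_integral_Ioc, ← intervalIntegral.integral_of_le hc,
        intervalIntegral.integral_comp_sub_left (fun x => x ^ (n + k)) c]
      simp
    calc ∫ x in cornerSimplex (n + 1) c, (c - ∑ i, x i) ^ k
        = ∫ p : ℝ × (Fin n → ℝ), F (Fin.cons p.1 p.2) := by
          rw [← integral_indicator measurableSet_cornerSimplex, ← hpres.integral_comp']
          simp only [he]
          rfl
      _ = ∫ t in Icc 0 c, (c - t) ^ (n + k) * k ! / (n + k)! := by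
          rw [Measure.volume_eq_prod, integral_prod _ hFe, ← integral_indicator measurableSet_Icc]
          exact integral_congr_ae (.of_forall hslice)
      _ = c ^ (n + 1 + k) * k ! / (n + 1 + k)! := by
          simp only [div_eq_mul_inv, integral_mul_const, hline]
          rw [show n + 1 + k = n + k + 1 by omega, Nat.factorial_succ]
          push_cast
          field_simp

theorem volume_cornerSimplex (hc : 0 ≤ c) :
    volume (cornerSimplex n c) = ENNReal.ofReal (c ^ n / n !) := by
  have h := setIntegral_cornerSimplex_pow (n := n) 0 hc
  simp only [pow_zero, integral_const, measureReal_restrict_apply_univ, smul_eq_mul, mul_one,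
    add_zero, Nat.factorial_zero, Nat.cast_one] at h
  rw [← h, ofReal_measureReal isCompact_cornerSimplex.measure_lt_top.ne]

end cornerSimplex

theorem unimodularSimplex_eq_cornerSimplex (n : ℕ) : unimodularSimplex n = cornerSimplex n 1 := by
  classical
  refine (convexHull_min ?_ convex_cornerSimplex).antisymm fun x hx => ?_
  · rintro v (rfl | ⟨i, rfl⟩)
    · exact ⟨fun _ => le_rfl, by simp⟩
    · refine ⟨fun j => ?_, by simp⟩
      simp only [Pi.single_apply]
      split_ifs <;> norm_num
  -- `x` is the center of mass of `0` with weight `1 - ∑ xᵢ` and of the `eᵢ` with weights `xᵢ`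
  let w : Option (Fin n) → ℝ := fun o => o.elim (1 - ∑ j, x j) x
  let z : Option (Fin n) → Fin n → ℝ := fun o => o.elim 0 fun i => Pi.single i 1
  have hw : ∑ o, w o = 1 := by simp [w, Fintype.sum_option]
  have hw0 : ∀ o ∈ Finset.univ, 0 ≤ w o := by
    rintro (_ | i) _
    exacts [sub_nonneg.mpr hx.2, hx.1 i]
  have hz : ∀ o ∈ Finset.univ, z o ∈ insert 0 (range fun i => Pi.single i (1 : ℝ)) := by
    rintro (_ | i) _
    exacts [mem_insert _ _, mem_insert_of_mem _ (mem_range_self i)]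
  have hmem := Finset.centerMass_mem_convexHull Finset.univ hw0 (by rw [hw]; exact one_pos) hz
  convert hmem
  rw [Finset.centerMass_eq_of_sum_1 _ _ hw, Fintype.sum_option]
  ext j
  simp [w, z, Pi.single_apply]

theorem equality_case_polytope_general (n : ℕ)
    (R : Set (Fin n → ℝ))
    (hpoly : ∃ W : Set (Fin n → ℝ), W.Finite ∧ R = convexHull ℝ W)
    (hfull : (interior R).Nonempty)
    (hsub2 : R ⊆ {x | ∀ i, 0 ≤ x i})
    (hbary : ∫ x in R, x = (volume R).toReal • (fun _ => (1 : ℝ)))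
    (hvol : (volume R).toReal = ((n : ℝ) + 1) ^ n / (n.factorial : ℝ)) :
    R = (((n : ℝ) + 1) • ·) '' unimodularSimplex n := by
  obtain ⟨W, hW, hRW⟩ := hpoly
  have hRc : IsCompact R := hRW ▸ hW.isCompact_convexHull (𝕜 := ℝ)
  have hRconv : Convex ℝ R := hRW ▸ convex_convexHull ℝ W
  have hRfin : volume R ≠ ⊤ := hRc.measure_lt_top.ne
  have hc : (0 : ℝ) < n + 1 := by positivity
  rw [image_smul, unimodularSimplex_eq_cornerSimplex, smul_cornerSimplex hc, mul_one]
  set P := cornerSimplex n (n + 1)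
  have hf : Continuous fun x : Fin n → ℝ => (n + 1 : ℝ) - ∑ i, x i := by fun_prop
  have hfR : ∫ x in R, ((n + 1 : ℝ) - ∑ i, x i) = (volume R).toReal := by
    rw [setIntegral_sub_sum_of_barycenter (continuous_id.continuousOn.integrableOn_compact hRc)
      hRfin hbary]
    simp
  have hfP : ∫ x in P, ((n + 1 : ℝ) - ∑ i, x i) = (volume R).toReal := by
    have h := setIntegral_cornerSimplex_pow (n := n) 1 hc.le
    simp only [pow_one] at h
    rw [h, hvol, Nat.factorial_one, Nat.factorial_succ]
    push_cast
    field_simp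
    ring
  have hRP : R ⊆ P := hRconv.subset_of_measure_sdiff_eq_zero hfull isClosed_cornerSimplex <|
    measure_sdiff_eq_zero_of_setIntegral_le hRc.measurableSet measurableSet_cornerSimplex
      (hf.continuousOn.integrableOn_compact hRc)
      (hf.continuousOn.integrableOn_compact isCompact_cornerSimplex)
      (fun x hx => sub_neg.mpr (not_le.mp (not_and.mp hx.2 (hsub2 hx.1))))
      (fun x hx => sub_nonneg.mpr hx.1.2)
      (hfP.trans hfR.symm).le
  have hPR : P ⊆ R := convex_cornerSimplex.subset_of_measure_sdiff_eq_zero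
    (hfull.mono (interior_mono hRP)) hRc.isClosed <| by
      rw [measure_sdiff hRP hRc.measurableSet.nullMeasurableSet hRfin, volume_cornerSimplex hc.le,
        ← hvol, ENNReal.ofReal_toReal hRfin, tsub_self]
  exact hRP.antisymm hPR

/-- Key combinatorial step of the equality case: an `n`-dimensional polytope `R` with
`nΔₙ ⊆ R ⊆ ℝⁿ₊`, such that `R − 𝟙` is reflexive, the barycenter of `R` is `𝟙` and
`vol(R) = (n+1)ⁿ/n!`, must equal `(n+1)Δₙ`. -/
theorem equality_case_polytope (n : ℕ) (hn : 1 ≤ n)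
    (R : Set (Fin n → ℝ))
    (hpoly : ∃ W : Set (Fin n → ℝ), W.Finite ∧ R = convexHull ℝ W)
    (hfull : (interior R).Nonempty)
    (hsub1 : (((n : ℝ) • ·) '' unimodularSimplex n) ⊆ R)
    (hsub2 : R ⊆ {x | ∀ i, 0 ≤ x i})
    (hrefl : IsReflexive ((fun x => x - fun _ => (1 : ℝ)) '' R))
    (hbary : ∫ x in R, x = (volume R).toReal • (fun _ => (1 : ℝ)))
    (hvol : (volume R).toReal = ((n : ℝ) + 1) ^ n / (n.factorial : ℝ)) :
    R = (((n : ℝ) + 1) • ·) '' unimodularSimplex n :=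
  equality_case_polytope_general n R hpoly hfull hsub2 hbary hvol
end

section
/- Let K ⊆ ℝ^n be an n-dimensional compact convex body containing the origin in its interior, with barycenter b_K ≠ 0. Let x_K be the intersection point of the ray b_K − ℝ_{≥0}·b_K with the boundary of K, and let R(K) := |x_K|/|x_K − b_K|. Then K' := R(K)·(K − b_K) is contained in K. -/
/-!
The barycenter `b` lies in `K`, and since `0 ∈ int K` the boundary point `x_K = (1 - t) b`
on the ray must have `t > 1`, so that `0` lies on the segment `[x_K, b]`, dividing it in the
ratio `r = |x_K| / |x_K - b| = (t - 1) / t`. The homothety with center `x_K` and ratio `r` maps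
`b` to `0`, hence it maps `K` onto `r • (K - b)`, and by convexity it maps `K` into itself.
-/

open MeasureTheory

theorem Convex.inv_measure_smul_setIntegral_id_mem {E : Type*} [NormedAddCommGroup E]
    [NormedSpace ℝ E] [CompleteSpace E] [MeasurableSpace E] [BorelSpace E] {K : Set E}
    (hK : Convex ℝ K) (hKc : IsCompact K) (μ : Measure E) [IsFiniteMeasureOnCompacts μ] (hμK : μ K ≠ 0) :
    (μ K).toReal⁻¹ • ∫ x in K, x ∂μ ∈ K := by
  have hint : IntegrableOn (fun x : E => x) K μ :=
    continuous_id.continuousOn.integrableOn_compact hKc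
  have := hK.set_average_mem hKc.isClosed hμK hKc.measure_ne_top
    ((ae_restrict_mem hKc.measurableSet).mono fun _ hx => hx) hint
  rwa [setAverage_eq, measureReal_def] at this

theorem Convex.image_smul_sub_subset {E : Type*} [AddCommGroup E] [Module ℝ E] {K : Set E}
    (hK : Convex ℝ K) {x b : E} (hx : x ∈ K) {r : ℝ} (hr0 : 0 ≤ r) (hr1 : r ≤ 1)
    (hcenter : (1 - r) • x + r • b = 0) : (fun y => r • (y - b)) '' K ⊆ K := by
  rintro _ ⟨y, hy, rfl⟩
  have hhomothety : r • (y - b) = (1 - r) • x + r • y := calc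
    r • (y - b) = (1 - r) • x + r • y - ((1 - r) • x + r • b) := by module
    _ = (1 - r) • x + r • y := by rw [hcenter, sub_zero]
  change r • (y - b) ∈ K
  rw [hhomothety]
  exact hK hx hy (by linarith) hr0 (by ring)

theorem norm_sub_smul_div_norm_sub_smul_sub {E : Type*} [NormedAddCommGroup E]
    [NormedSpace ℝ E] {b : E} (hb : b ≠ 0) {t : ℝ} (ht : 1 ≤ t) :
    ‖b - t • b‖ / ‖b - t • b - b‖ = (t - 1) / t := by
  have hbnorm : ‖b‖ ≠ 0 := norm_ne_zero_iff.mpr hb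
  rw [show b - t • b = (1 - t) • b by module, show (1 - t) • b - b = (-t) • b by module,
    norm_smul, norm_smul, Real.norm_eq_abs, Real.norm_eq_abs, abs_of_nonpos (by linarith),
    abs_neg, abs_of_nonneg (by linarith), mul_div_mul_right _ _ hbnorm, neg_sub]

theorem scaled_translate_subset_general (n : ℕ)
    (K : Set (Fin n → ℝ))
    (hconv : Convex ℝ K) (hcomp : IsCompact K)
    (h0 : (0 : Fin n → ℝ) ∈ interior K)
    (b : Fin n → ℝ) (hb : b = (volume K).toReal⁻¹ • ∫ x in K, x) (hbne : b ≠ 0)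
    (xK : Fin n → ℝ) (hxK : xK ∈ frontier K)
    (hray : ∃ t : ℝ, 0 ≤ t ∧ xK = b - t • b)
    (r : ℝ) (hr : r = ‖xK‖ / ‖xK - b‖) :
    (fun x => r • (x - b)) '' K ⊆ K := by
  obtain ⟨t, ht0, rfl⟩ := hray
  rw [hcomp.isClosed.frontier_eq] at hxK
  have hbK : b ∈ K := hb ▸ hconv.inv_measure_smul_setIntegral_id_mem hcomp volume
    (Measure.measure_pos_of_nonempty_interior _ ⟨0, h0⟩).ne'
  rcases ht0.eq_or_lt with rfl | ht0
  · -- `x_K = b`: then `r = ‖b‖ / 0 = 0` and `r • (K - b) = {0}`.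
    rintro _ ⟨x, -, rfl⟩
    simpa [hr] using interior_subset h0
  have ht1 : 1 < t := by
    by_contra! ht1
    have := hconv.add_smul_sub_mem_interior hbK h0 ⟨ht0, ht1⟩
    exact hxK.2 (by simpa [sub_eq_add_neg] using this)
  rw [norm_sub_smul_div_norm_sub_smul_sub hbne ht1.le] at hr
  subst hr
  refine hconv.image_smul_sub_subset hxK.1 (div_nonneg (by linarith) ht0.le)
    ((div_le_one ht0).mpr (by linarith)) ?_
  field_simp
  module

/-- Let `K` be an `n`-dimensional compact convex body with `0 ∈ int K` and barycenter
`b ≠ 0`. If `xK` is the intersection of the ray `b − ℝ₊·b` with `∂K` and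
`R(K) = |xK|/|xK − b|`, then `R(K)·(K − b) ⊆ K`. -/
theorem scaled_translate_subset (n : ℕ) (hn : 1 ≤ n)
    (K : Set (Fin n → ℝ))
    (hconv : Convex ℝ K) (hcomp : IsCompact K)
    (h0 : (0 : Fin n → ℝ) ∈ interior K)
    (b : Fin n → ℝ) (hb : b = (volume K).toReal⁻¹ • ∫ x in K, x) (hbne : b ≠ 0)
    (xK : Fin n → ℝ) (hxK : xK ∈ frontier K)
    (hray : ∃ t : ℝ, 0 ≤ t ∧ xK = b - t • b)
    (r : ℝ) (hr : r = ‖xK‖ / ‖xK - b‖) :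
    (fun x => r • (x - b)) '' K ⊆ K :=
  scaled_translate_subset_general n K hconv hcomp h0 b hb hbne xK hxK hray r hr
end

section
/- Let K ⊆ ℝ^n be an n-dimensional compact convex body such that K ⊆ ℝ^n_{≥0} and the barycenter of K is the point 𝟙 = (1,…,1). Then vol(K) ≤ (n+1)^n/n!. -/
open MeasureTheory


open MeasureTheory Set ENNReal

lemma vol_coord_eq_zero {n : ℕ} {i j : Fin n} (hij : i ≠ j) :
    volume {y : Fin n → ℝ | y i = y j} = 0 := by
  have h : {y : Fin n → ℝ | y i = y j} =
      (LinearMap.ker ((LinearMap.proj i : (Fin n → ℝ) →ₗ[ℝ] ℝ) - LinearMap.proj j) : Set _) := by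
    ext y; simp [sub_eq_zero]
  rw [h]
  apply Measure.addHaar_submodule
  intro htop
  have h1 : (Pi.single i 1 : Fin n → ℝ) ∈ LinearMap.ker
      ((LinearMap.proj i : (Fin n → ℝ) →ₗ[ℝ] ℝ) - LinearMap.proj j) := by
    rw [htop]; trivial
  simp [LinearMap.mem_ker, Pi.single_apply, hij.symm] at h1
lemma measurableSet_mono_cube {n : ℕ} (σ : Equiv.Perm (Fin n)) (t : ℝ) :
    MeasurableSet {y : Fin n → ℝ | Monotone (y ∘ σ) ∧ ∀ i, y i ∈ Icc (0:ℝ) t} := by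
  rw [Set.setOf_and]
  refine MeasurableSet.inter ?_ ?_
  · have h : {y : Fin n → ℝ | Monotone (y ∘ σ)} =
        ⋂ (i : Fin n) (j : Fin n) (_ : i ≤ j), {y : Fin n → ℝ | y (σ i) ≤ y (σ j)} := by
      ext y
      simp only [mem_setOf_eq, mem_iInter]
      exact ⟨fun h i j hij => h hij, fun h a b hab => h a b hab⟩
    rw [h]
    exact MeasurableSet.iInter fun i => MeasurableSet.iInter fun j =>
      MeasurableSet.iInter fun _ =>
        measurableSet_le (measurable_pi_apply _) (measurable_pi_apply _)
  · have h : {y : Fin n → ℝ | ∀ i, y i ∈ Icc (0:ℝ) t} =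
        ⋂ i, (fun y : Fin n → ℝ => y i) ⁻¹' Icc 0 t := by
      ext y; simp
    rw [h]
    exact MeasurableSet.iInter fun i => (measurable_pi_apply i) measurableSet_Icc

lemma vol_ordered_le {n : ℕ} {t : ℝ} (ht : 0 ≤ t) :
    volume {y : Fin n → ℝ | Monotone y ∧ ∀ i, y i ∈ Icc (0:ℝ) t}
      ≤ ENNReal.ofReal (t ^ n / (n.factorial : ℝ)) := by
  classical
  set R : Equiv.Perm (Fin n) → Set (Fin n → ℝ) :=
    fun σ => {y | Monotone (y ∘ σ) ∧ ∀ i, y i ∈ Icc (0:ℝ) t} with hR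
  have hmeas : ∀ σ, MeasurableSet (R σ) := fun σ => measurableSet_mono_cube σ t
  have hvol : ∀ σ, volume (R σ) = volume (R 1) := by
    intro σ
    have hmp : MeasurePreserving
        (MeasurableEquiv.arrowCongr' (σ.symm : Fin n ≃ Fin n) (MeasurableEquiv.refl ℝ))
        (volume : Measure (Fin n → ℝ)) volume :=
      volume_preserving_arrowCongr' _ _ (MeasurePreserving.id _)
    have hpre : (MeasurableEquiv.arrowCongr' (σ.symm : Fin n ≃ Fin n)
        (MeasurableEquiv.refl ℝ)) ⁻¹' (R 1) = R σ := by
      ext y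
      simp only [hR, mem_preimage, mem_setOf_eq, MeasurableEquiv.arrowCongr',
        Equiv.arrowCongr', Equiv.arrowCongr, EquivLike.coe_coe, MeasurableEquiv.coe_mk,
        Equiv.coe_fn_mk, MeasurableEquiv.refl, Equiv.refl_apply, Equiv.symm_symm,
        Equiv.Perm.coe_one, Function.comp_id, Function.id_comp]
      constructor
      · rintro ⟨h1, h2⟩
        exact ⟨h1, fun i => by simpa using h2 (σ.symm i)⟩
      · rintro ⟨h1, h2⟩
        exact ⟨h1, fun i => h2 (σ i)⟩
    rw [← hpre, hmp.measure_preimage (hmeas 1).nullMeasurableSet]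
  have hdisj : Pairwise (Function.onFun (AEDisjoint volume) R) := by
    intro σ τ hστ
    obtain ⟨k, hk⟩ : ∃ k, σ k ≠ τ k := by
      by_contra h; push_neg at h; exact hστ (Equiv.ext h)
    have hsub2 : R σ ∩ R τ ⊆ ⋃ (p : Fin n × Fin n) (_ : p.1 ≠ p.2),
        {y : Fin n → ℝ | y p.1 = y p.2} := by
      rintro y ⟨⟨h1, -⟩, ⟨h2, -⟩⟩
      by_cases hinj : Function.Injective y
      · exfalso
        have e1 : y ∘ σ = y ∘ (Tuple.sort y) := Tuple.comp_sort_eq_comp_iff_monotone.mpr h1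
        have e2 : y ∘ τ = y ∘ (Tuple.sort y) := Tuple.comp_sort_eq_comp_iff_monotone.mpr h2
        have : y (σ k) = y (τ k) := by
          have := congrFun (e1.trans e2.symm) k; simpa using this
        exact hk (hinj this)
      · simp only [Function.Injective, not_forall] at hinj
        obtain ⟨a, b, hab, hne⟩ := hinj
        exact mem_iUnion₂.mpr ⟨(a, b), hne, hab⟩
    refine measure_mono_null hsub2 ?_
    refine measure_iUnion_null fun p => measure_iUnion_null fun hp => vol_coord_eq_zero hp
  have hcover : (univ.pi fun _ : Fin n => Icc (0:ℝ) t) ⊆ ⋃ σ, R σ := fun y hy =>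
    mem_iUnion.mpr ⟨Tuple.sort y, Tuple.monotone_sort y, fun i => hy i (mem_univ i)⟩
  have hsubcube : ∀ σ, R σ ⊆ univ.pi fun _ : Fin n => Icc (0:ℝ) t :=
    fun σ y hy i _ => hy.2 i
  have hcube : volume ((univ : Set (Fin n)).pi fun _ => Icc (0:ℝ) t) = ENNReal.ofReal (t ^ n) := by
    rw [volume_pi_pi]
    simp [Real.volume_Icc, ← ENNReal.ofReal_pow ht]
  have hsum : volume (⋃ σ, R σ) = (n.factorial : ℝ≥0∞) * volume (R 1) := by
    rw [measure_iUnion₀ hdisj fun σ => (hmeas σ).nullMeasurableSet, tsum_fintype]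
    simp only [hvol]
    rw [Finset.sum_const, Finset.card_univ, Fintype.card_perm, Fintype.card_fin,
      nsmul_eq_mul]
  have key : (n.factorial : ℝ≥0∞) * volume (R 1) ≤ ENNReal.ofReal (t ^ n) := by
    rw [← hsum, ← hcube]
    exact measure_mono (iUnion_subset hsubcube)
  have hR1 : {y : Fin n → ℝ | Monotone y ∧ ∀ i, y i ∈ Icc (0:ℝ) t} = R 1 := by
    simp [hR]
  rw [hR1]
  rw [ENNReal.ofReal_div_of_pos (by positivity), ENNReal.le_div_iff_mul_le]
  · rw [ENNReal.ofReal_natCast, mul_comm]; exact key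
  · left; simp [Nat.factorial_ne_zero, (Nat.factorial_pos n).ne']
  · left; exact ENNReal.ofReal_ne_top
lemma vol_simplex_le {n : ℕ} {t : ℝ} (ht : 0 ≤ t) :
    volume {x : Fin n → ℝ | (∀ i, 0 ≤ x i) ∧ ∑ i, x i ≤ t}
      ≤ ENNReal.ofReal (t ^ n / (n.factorial : ℝ)) := by
  classical
  set M : Matrix (Fin n) (Fin n) ℝ := fun i j => if j ≤ i then 1 else 0 with hM
  have hMdet : M.det = 1 := by
    have htri : M.BlockTriangular OrderDual.toDual := by
      intro i j hij
      simp only [hM]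
      rw [if_neg]
      exact fun h => absurd (OrderDual.toDual_lt_toDual.mp hij) (not_lt.mpr h)
    rw [Matrix.det_of_lowerTriangular M htri]
    simp [hM]
  set P : (Fin n → ℝ) →ₗ[ℝ] (Fin n → ℝ) := Matrix.toLin' M with hP
  have hPdet : LinearMap.det P = 1 := by rw [hP, LinearMap.det_toLin', hMdet]
  have hPapply : ∀ (x : Fin n → ℝ) (i : Fin n), P x i = ∑ j ∈ Finset.Iic i, x j := by
    intro x i
    rw [hP, Matrix.toLin'_apply, Matrix.mulVec, dotProduct]
    simp only [hM]
    simp only [ite_mul, one_mul, zero_mul]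
    rw [← Finset.sum_filter]
    congr 1
    ext j
    simp
  have hsub : {x : Fin n → ℝ | (∀ i, 0 ≤ x i) ∧ ∑ i, x i ≤ t} ⊆
      P ⁻¹' {y : Fin n → ℝ | Monotone y ∧ ∀ i, y i ∈ Icc (0:ℝ) t} := by
    rintro x ⟨hx0, hxt⟩
    refine ⟨fun i k hik => ?_, fun i => ⟨?_, ?_⟩⟩
    · rw [hPapply, hPapply]
      exact Finset.sum_le_sum_of_subset_of_nonneg (Finset.Iic_subset_Iic.mpr hik)
        (fun j _ _ => hx0 j)
    · rw [hPapply]; exact Finset.sum_nonneg fun j _ => hx0 j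
    · rw [hPapply]
      refine le_trans (Finset.sum_le_sum_of_subset_of_nonneg (Finset.subset_univ _)
        (fun j _ _ => hx0 j)) hxt
  calc volume {x : Fin n → ℝ | (∀ i, 0 ≤ x i) ∧ ∑ i, x i ≤ t}
      ≤ volume (P ⁻¹' {y : Fin n → ℝ | Monotone y ∧ ∀ i, y i ∈ Icc (0:ℝ) t}) :=
        measure_mono hsub
    _ = volume {y : Fin n → ℝ | Monotone y ∧ ∀ i, y i ∈ Icc (0:ℝ) t} := by
        rw [Measure.addHaar_preimage_linearMap volume (by rw [hPdet]; norm_num)]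
        simp [hPdet]
    _ ≤ ENNReal.ofReal (t ^ n / (n.factorial : ℝ)) := vol_ordered_le ht

lemma ofReal_integral_le_lintegral_ofReal' {α : Type*} [MeasurableSpace α] {μ : Measure α}
    {g : α → ℝ} (hg : Integrable g μ) :
    ENNReal.ofReal (∫ x, g x ∂μ) ≤ ∫⁻ x, ENNReal.ofReal (g x) ∂μ := by
  calc ENNReal.ofReal (∫ x, g x ∂μ) ≤ ENNReal.ofReal (∫ x, max (g x) 0 ∂μ) :=
        ENNReal.ofReal_le_ofReal (integral_mono hg hg.pos_part fun x => le_max_left _ _)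
    _ = ∫⁻ x, ENNReal.ofReal (max (g x) 0) ∂μ :=
        ofReal_integral_eq_lintegral_ofReal hg.pos_part (ae_of_all _ fun x => le_max_right _ _)
    _ = ∫⁻ x, ENNReal.ofReal (g x) ∂μ := by
        refine lintegral_congr fun x => ?_
        rcases le_total (g x) 0 with h | h
        · simp [max_eq_right h, ENNReal.ofReal_of_nonpos h]
        · simp [max_eq_left h]

/-- An `n`-dimensional compact convex body contained in the nonnegative orthant with
barycenter `𝟙 = (1,…,1)` has volume at most `(n+1)ⁿ/n!`. -/
theorem volume_le_of_subset_orthant_barycenter_one (n : ℕ) (hn : 1 ≤ n)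
    (K : Set (Fin n → ℝ))
    (hconv : Convex ℝ K) (hcomp : IsCompact K) (hint : (interior K).Nonempty)
    (hsub : K ⊆ {x | ∀ i, 0 ≤ x i})
    (hbary : ∫ x in K, x = (volume K).toReal • (fun _ => (1 : ℝ))) :
    (volume K).toReal ≤ ((n : ℝ) + 1) ^ n / (n.factorial : ℝ) := by
  classical
  set V : ℝ := (volume K).toReal with hV
  have hV0 : 0 ≤ V := ENNReal.toReal_nonneg
  have hKmeas : MeasurableSet K := hcomp.isClosed.measurableSet
  have hKfin : volume K ≠ ⊤ := hcomp.measure_lt_top.ne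
  set S : (Fin n → ℝ) → ℝ := fun x => ∑ i, x i with hS
  have hScont : Continuous S := continuous_finset_sum _ fun i _ => continuous_apply i
  have hSint : IntegrableOn S K := hScont.continuousOn.integrableOn_compact hcomp
  have hid_int : IntegrableOn (fun x : Fin n → ℝ => x) K :=
    continuous_id.continuousOn.integrableOn_compact hcomp
  -- the integral of S over K is n * V
  have h_coord : ∀ i, ∫ x in K, x i = V := by
    intro i
    have := (ContinuousLinearMap.proj (R := ℝ) (φ := fun _ : Fin n => ℝ) i).integral_comp_comm
      hid_int
    simp only [ContinuousLinearMap.proj_apply] at this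
    rw [this, hbary]
    simp
  have h_sum : ∫ x in K, S x = n * V := by
    rw [hS]
    have : ∀ i ∈ Finset.univ, IntegrableOn (fun x : Fin n → ℝ => x i) K :=
      fun i _ => (continuous_apply i).continuousOn.integrableOn_compact hcomp
    rw [integral_finset_sum _ this]
    simp [h_coord, Finset.sum_const, nsmul_eq_mul]
  -- layer cake
  have f_nn : 0 ≤ᵐ[volume.restrict K] S := by
    filter_upwards [ae_restrict_mem hKmeas] with x hx
    exact Finset.sum_nonneg fun i _ => hsub hx i
  have hlayer : ∫⁻ t in Ioi (0:ℝ), volume.restrict K {a | t < S a} = ENNReal.ofReal (n * V) := by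
    rw [← lintegral_eq_lintegral_meas_lt _ f_nn hScont.aemeasurable.restrict, ← h_sum,
      ofReal_integral_eq_lintegral_ofReal hSint f_nn]
  -- pointwise lower bound on the measures of superlevel sets
  have hpoint : ∀ t ∈ Ioc (0:ℝ) (n + 1),
      ENNReal.ofReal (V - t ^ n / (n.factorial : ℝ)) ≤ volume.restrict K {a | t < S a} := by
    intro t ht
    have hmeaslt : MeasurableSet {a : Fin n → ℝ | t < S a} :=
      measurableSet_lt measurable_const hScont.measurable
    rw [Measure.restrict_apply hmeaslt]
    have hsplit : volume K = volume ({a | t < S a} ∩ K) + volume ({a | S a ≤ t} ∩ K) := by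
      rw [← measure_inter_add_diff K hmeaslt]
      congr 1
      · rw [inter_comm]
      · rw [diff_eq, inter_comm]
        congr 1
        ext a; simp [not_lt]
    have hsimple : volume ({a | S a ≤ t} ∩ K) ≤ ENNReal.ofReal (t ^ n / (n.factorial : ℝ)) := by
      refine le_trans (measure_mono ?_) (vol_simplex_le ht.1.le)
      rintro a ⟨ha1, ha2⟩
      exact ⟨hsub ha2, ha1⟩
    calc ENNReal.ofReal (V - t ^ n / (n.factorial : ℝ))
        = ENNReal.ofReal V - ENNReal.ofReal (t ^ n / (n.factorial : ℝ)) :=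
          ENNReal.ofReal_sub _ (div_nonneg (pow_nonneg ht.1.le n) (Nat.cast_nonneg _))
      _ ≤ volume K - volume ({a | S a ≤ t} ∩ K) := by
          refine tsub_le_tsub ?_ hsimple
          rw [hV, ENNReal.ofReal_toReal hKfin]
      _ ≤ volume ({a | t < S a} ∩ K) := by
          rw [hsplit]
          exact tsub_le_iff_right.mpr (le_refl _)
  -- put the chain together
  have hchain : ENNReal.ofReal (∫ t in Ioc (0:ℝ) (n+1), (V - t ^ n / (n.factorial : ℝ)))
      ≤ ENNReal.ofReal (n * V) := by
    calc ENNReal.ofReal (∫ t in Ioc (0:ℝ) (n+1), (V - t ^ n / (n.factorial : ℝ)))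
        ≤ ∫⁻ t in Ioc (0:ℝ) (n+1), ENNReal.ofReal (V - t ^ n / (n.factorial : ℝ)) :=
          ofReal_integral_le_lintegral_ofReal'
            (((intervalIntegrable_const (c := V)).sub
              ((intervalIntegral.intervalIntegrable_pow n).div_const _)).1)
      _ ≤ ∫⁻ t in Ioc (0:ℝ) (n+1), volume.restrict K {a | t < S a} :=
          setLIntegral_mono' measurableSet_Ioc hpoint
      _ ≤ ∫⁻ t in Ioi (0:ℝ), volume.restrict K {a | t < S a} :=
          lintegral_mono_set Ioc_subset_Ioi_self
      _ = ENNReal.ofReal (n * V) := hlayer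
  -- compute the interval integral
  have hb : (0:ℝ) ≤ n + 1 := by positivity
  have hcomp_int : ∫ t in Ioc (0:ℝ) (n+1), (V - t ^ n / (n.factorial : ℝ))
      = ((n:ℝ) + 1) * V - ((n:ℝ)+1) ^ (n+1) / (((n:ℝ)+1) * (n.factorial : ℝ)) := by
    have h1 : IntervalIntegrable (fun _ : ℝ => V) volume 0 ((n:ℝ)+1) :=
      intervalIntegrable_const (c := V)
    have h2 : IntervalIntegrable (fun t : ℝ => t ^ n / (n.factorial:ℝ)) volume 0 ((n:ℝ)+1) :=
      (intervalIntegral.intervalIntegrable_pow n).div_const _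
    rw [← intervalIntegral.integral_of_le hb, intervalIntegral.integral_sub h1 h2,
      intervalIntegral.integral_const, intervalIntegral.integral_div, integral_pow,
      smul_eq_mul, zero_pow (Nat.succ_ne_zero n), sub_zero, sub_zero, div_div]
  -- conclude
  have hineq : ((n:ℝ) + 1) * V - ((n:ℝ)+1) ^ (n+1) / (((n:ℝ)+1) * (n.factorial : ℝ)) ≤ n * V := by
    have := (ENNReal.ofReal_le_ofReal_iff (by positivity)).mp hchain
    rwa [hcomp_int] at this
  have hfac : (0:ℝ) < (n.factorial : ℝ) := by exact_mod_cast Nat.factorial_pos n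
  have hnp : (0:ℝ) < (n:ℝ) + 1 := by positivity
  have hkey : ((n:ℝ)+1) ^ (n+1) / (((n:ℝ)+1) * (n.factorial : ℝ))
      = ((n:ℝ)+1) ^ n / (n.factorial : ℝ) := by
    rw [pow_succ]
    field_simp
  nlinarith [hineq, hkey]
end

section
/- Let S ⊆ ℝ^n be a simplex of the form S = conv(a, B) where B is an (n−1)-dimensional base in a hyperplane {⟨u,x⟩ = c} and a is an apex with ⟨u,a⟩ < c. If the barycenter of S lies on the hyperplane {⟨u,x⟩ = c₀} with H = {⟨u,x⟩ ≤ c₀}, then vol(S ∩ H) = (n/(n+1))^n vol(S), where c₀ = (⟨u,a⟩ + n·c)/(n+1). -/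
/-!
Every point of the cone `conv(a, B)` is `lineMap a b μ` with `b ∈ conv B` and `μ ∈ [0, 1]`, and
an affine functional `f` that equals `c` on `B` takes the value `f a + μ (c - f a)` there. Cutting
the cone at level `f a + t (c - f a)` therefore keeps exactly the points with `μ ≤ t`, i.e. the
image of the cone under the homothety of ratio `t` centred at the apex, whose volume is `tⁿ` times
that of the cone. The barycentric level `c₀` is the case `t = n / (n + 1)`.
-/

open MeasureTheory Set AffineMap

section Cone

variable {E : Type*} [AddCommGroup E] [Module ℝ E]

theorem convexHull_insert_eq_image2_lineMap {a : E} {B : Set E} (hB : B.Nonempty) :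
    convexHull ℝ (insert a B) =
      image2 (fun b (μ : ℝ) => lineMap a b μ) (convexHull ℝ B) (Icc 0 1) := by
  ext x
  simp [convexHull_insert hB, segment_eq_image_lineMap, mem_image2, and_assoc]

theorem image_homothety_image2_lineMap (a : E) (P : Set E) {t : ℝ} (ht : 0 ≤ t) :
    homothety a t '' image2 (fun b (μ : ℝ) => lineMap a b μ) P (Icc 0 1) =
      image2 (fun b (μ : ℝ) => lineMap a b μ) P (Icc 0 t) := by
  have hscale : ∀ b (μ : ℝ), homothety a t (lineMap a b μ) = lineMap a b (t * μ) := by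
    intro b μ
    rw [← homothety_eq_lineMap, ← homothety_eq_lineMap, homothety_mul_apply]
  have hIcc : Icc 0 t = (t * ·) '' Icc 0 1 := by
    rw [image_mul_left_Icc ht zero_le_one, mul_zero, mul_one]
  rw [image_image2, hIcc, image2_image_right]
  simp only [hscale]

theorem image2_lineMap_inter_le (f : E →ᵃ[ℝ] ℝ) {a : E} {P : Set E} {c t : ℝ}
    (hP : ∀ b ∈ P, f b = c) (ha : f a < c) (ht : t ≤ 1) :
    image2 (fun b (μ : ℝ) => lineMap a b μ) P (Icc 0 1) ∩ {x | f x ≤ f a + t * (c - f a)} =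
      image2 (fun b (μ : ℝ) => lineMap a b μ) P (Icc 0 t) := by
  have hf : ∀ b ∈ P, ∀ μ : ℝ, f (lineMap a b μ) ≤ f a + t * (c - f a) ↔ μ ≤ t := by
    intro b hb μ
    rw [apply_lineMap, hP b hb, lineMap_apply_ring', add_comm, add_le_add_iff_left,
      mul_le_mul_iff_of_pos_right (sub_pos.2 ha)]
  ext x
  simp only [mem_inter_iff, mem_image2, mem_Icc, mem_ofPred_eq]
  constructor
  · rintro ⟨⟨b, hb, μ, ⟨hμ₀, -⟩, rfl⟩, hx⟩
    exact ⟨b, hb, μ, ⟨hμ₀, (hf b hb μ).1 hx⟩, rfl⟩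
  · rintro ⟨b, hb, μ, ⟨hμ₀, hμt⟩, rfl⟩
    exact ⟨⟨b, hb, μ, ⟨hμ₀, hμt.trans ht⟩, rfl⟩, (hf b hb μ).2 hμt⟩

theorem convexHull_insert_inter_le_eq_image_homothety (f : E →ᵃ[ℝ] ℝ) {a : E} {B : Set E}
    {c t : ℝ} (hB : B.Nonempty) (hBc : ∀ b ∈ B, f b = c) (ha : f a < c) (ht₀ : 0 ≤ t)
    (ht₁ : t ≤ 1) :
    convexHull ℝ (insert a B) ∩ {x | f x ≤ f a + t * (c - f a)} =
      homothety a t '' convexHull ℝ (insert a B) := by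
  have hP : ∀ b ∈ convexHull ℝ B, f b = c :=
    convexHull_min hBc ((convex_singleton c).affine_preimage f)
  rw [convexHull_insert_eq_image2_lineMap hB, image2_lineMap_inter_le f hP ha ht₁,
    image_homothety_image2_lineMap a _ ht₀]

end Cone

theorem addHaar_convexHull_insert_inter_le {E : Type*} [NormedAddCommGroup E]
    [NormedSpace ℝ E] [MeasurableSpace E] [BorelSpace E] [FiniteDimensional ℝ E]
    (μ : Measure E) [μ.IsAddHaarMeasure] (f : E →ᵃ[ℝ] ℝ) {a : E} {B : Set E}
    {c t : ℝ} (hB : B.Nonempty) (hBc : ∀ b ∈ B, f b = c) (ha : f a < c) (ht₀ : 0 ≤ t)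
    (ht₁ : t ≤ 1) :
    μ (convexHull ℝ (insert a B) ∩ {x | f x ≤ f a + t * (c - f a)}) =
      ENNReal.ofReal (t ^ Module.finrank ℝ E) * μ (convexHull ℝ (insert a B)) := by
  rw [convexHull_insert_inter_le_eq_image_homothety f hB hBc ha ht₀ ht₁,
    Measure.addHaar_image_homothety, abs_of_nonneg (pow_nonneg ht₀ _)]

theorem simplex_attains_gruenbaum_general (n : ℕ) (hn : 1 ≤ n)
    (u : Fin n → ℝ) (c : ℝ)
    (a : Fin n → ℝ) (ha : ∑ i, u i * a i < c)
    (v : Fin n → (Fin n → ℝ)) (hv : ∀ i, ∑ j, u j * v i j = c)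
    (S : Set (Fin n → ℝ)) (hS : S = convexHull ℝ (insert a (Set.range v)))
    (c₀ : ℝ) (hc₀ : c₀ = ((∑ i, u i * a i) + n * c) / (n + 1))
    (H : Set (Fin n → ℝ)) (hH : H = {x | ∑ i, u i * x i ≤ c₀}) :
    (volume (S ∩ H)).toReal = ((n : ℝ) / (n + 1)) ^ n * (volume S).toReal := by
  have : Nonempty (Fin n) := ⟨⟨0, hn⟩⟩
  set f : (Fin n → ℝ) →ᵃ[ℝ] ℝ := (dotProductBilin ℝ ℝ u).toAffineMap
  set t : ℝ := n / (n + 1)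
  have ht₀ : 0 ≤ t := by positivity
  have ht₁ : t ≤ 1 := div_le_one_of_le₀ (by linarith) (by positivity)
  have hc₀' : c₀ = f a + t * (c - f a) := by
    rw [hc₀]
    simp only [f, t, LinearMap.coe_toAffineMap, dotProductBilin_apply_apply, dotProduct]
    field_simp
    ring
  have hH' : H = {x | f x ≤ f a + t * (c - f a)} := by rw [hH, ← hc₀']; rfl
  rw [hS, hH', addHaar_convexHull_insert_inter_le volume f (range_nonempty v)
    (by rintro _ ⟨i, rfl⟩; exact hv i) ha ht₀ ht₁, ENNReal.toReal_mul,
    ENNReal.toReal_ofReal (by positivity), Module.finrank_fin_fun]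

/-- Grünbaum's bound is attained by simplices: for a simplex `S = conv(a, v₁, …, vₙ)`
with base vertices in the hyperplane `{⟨u,x⟩ = c}` and apex `a` with `⟨u,a⟩ < c`, cutting
with the half-space `{⟨u,x⟩ ≤ c₀}` through the barycenter, where
`c₀ = (⟨u,a⟩ + n·c)/(n+1)`, gives exactly the fraction `(n/(n+1))ⁿ` of the volume. -/
theorem simplex_attains_gruenbaum (n : ℕ) (hn : 1 ≤ n)
    (u : Fin n → ℝ) (hu : u ≠ 0) (c : ℝ)
    (a : Fin n → ℝ) (ha : ∑ i, u i * a i < c)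
    (v : Fin n → (Fin n → ℝ)) (hv : ∀ i, ∑ j, u j * v i j = c)
    (hai : AffineIndependent ℝ (Fin.cons a v : Fin (n + 1) → (Fin n → ℝ)))
    (S : Set (Fin n → ℝ)) (hS : S = convexHull ℝ (insert a (Set.range v)))
    (c₀ : ℝ) (hc₀ : c₀ = ((∑ i, u i * a i) + n * c) / (n + 1))
    (H : Set (Fin n → ℝ)) (hH : H = {x | ∑ i, u i * x i ≤ c₀}) :
    (volume (S ∩ H)).toReal = ((n : ℝ) / (n + 1)) ^ n * (volume S).toReal :=
  simplex_attains_gruenbaum_general n hn u c a ha v hv S hS c₀ hc₀ H hH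
end
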